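/- Let M be the augmentation ideal of BT (spanned by nonempty decorated forests) with products: concatenation m, left graft G≻F (graft G on the root of the first tree of F, to the left, with l-edges) and right graft G≺F (graft F on the root of the last tree of G, to the right, with r-edges). Then for all nonempty forests F, G: (G≻F)† = F†≺G† and (G≺F)† = F†≻G†, where † is the reversal involution. -/
import Mathlib


/-- A planar rooted tree with `{l,r}`-decorated edges (admissible: no `r`-edge left of an
`l`-edge at a vertex): a tree is `B(F ⊗ G)` with `F` the `l`-children and `G` the
`r`-children. -/
inductive DTree : Type
  | node : List DTree → List DTree → DTree

mutual
  /-- `†` on trees: `(B(F ⊗ G))† = B(G† ⊗ F†)`. -/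
  def daggerT : DTree → DTree
    | .node l r => .node (daggerL r) (daggerL l)
  /-- `†` on forests: `(F₁ ⋯ F_n)† = F_n† ⋯ F₁†`. -/
  def daggerL : List DTree → List DTree
    | [] => []
    | t :: ts => daggerL ts ++ [daggerT t]
end

/-- Left graft `G ≻ F`: graft the forest `G` on the root of the first tree of `F`,
on the left, with `l`-decorated edges. -/
def succL (g : List DTree) : List DTree → List DTree
  | [] => []
  | (DTree.node l r) :: rest => DTree.node (g ++ l) r :: rest

/-- Right graft `G ≺ F`: graft the forest `F` on the root of the last tree of `G`,
on the right, with `r`-decorated edges. -/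
def precL : List DTree → List DTree → List DTree
  | [], _ => []
  | [DTree.node l r], f => [DTree.node l (r ++ f)]
  | t :: t' :: ts, f => t :: precL (t' :: ts) f

lemma daggerL_append (a b : List DTree) :
    daggerL (a ++ b) = daggerL b ++ daggerL a := by
  induction a with
  | nil => simp [daggerL]
  | cons t ts ih => simp [daggerL, ih]

lemma precL_append (xs : List DTree) (l r f : List DTree) :
    precL (xs ++ [DTree.node l r]) f = xs ++ [DTree.node l (r ++ f)] := by
  induction xs with
  | nil => simp [precL]
  | cons t ts ih =>
    cases h : ts ++ [DTree.node l r] with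
    | nil => simp at h
    | cons t' ts' =>
      have : precL (t :: (ts ++ [DTree.node l r])) f
          = t :: precL (ts ++ [DTree.node l r]) f := by
        rw [h]; simp [precL]
      simpa [this] using ih

/-- for all nonempty forests `F`, `G`:
`(G ≻ F)† = F† ≺ G†` and `(G ≺ F)† = F† ≻ G†`. -/
theorem dagger_succ_prec :
    ∀ F G : List DTree, F ≠ [] → G ≠ [] →
      daggerL (succL G F) = precL (daggerL F) (daggerL G) ∧
      daggerL (precL G F) = succL (daggerL F) (daggerL G) := by
  intro F G hF hG
  constructor
  · obtain ⟨t, ts, rfl⟩ := List.exists_cons_of_ne_nil hF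
    obtain ⟨l, r⟩ := t
    show daggerL (DTree.node (G ++ l) r :: ts) = _
    rw [daggerL, daggerT, daggerL_append]
    show _ = precL (daggerL ts ++ [DTree.node (daggerL r) (daggerL l)]) (daggerL G)
    rw [precL_append]
  · obtain ⟨init, last, rfl⟩ : ∃ i t, G = i ++ [t] := by
      rcases List.eq_nil_or_concat G with h | ⟨i, t, h⟩
      · exact absurd h hG
      · exact ⟨i, t, by simpa using h⟩
    obtain ⟨l, r⟩ := last
    rw [precL_append, daggerL_append, daggerL_append]
    show daggerL [DTree.node l (r ++ F)] ++ daggerL init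
        = succL (daggerL F) (daggerL [DTree.node l r] ++ daggerL init)
    simp only [daggerL, daggerT, List.nil_append, daggerL_append]
    rfl
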